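/- arXiv:2605.11915 — 3 statements merged into one kernel-verified Lean document; each statement's English description precedes it below -/
import Mathlib

section
/- Let d be a positive natural number, let F : EuclideanSpace ℝ d → ℝ be differentiable with L-Lipschitz gradient (L > 0) and μ-strongly convex (0 < μ ≤ L), attaining its minimum value F* at some point. Fix a learning rate η with 0 < η ≤ 1/(2L) and set A = 1 − 2μη + 2Lμη². Let (Ω, P) be a probability space, let N ≥ 0, let w₀ ∈ EuclideanSpace ℝ d be a fixed initial point, and let (w_t)_{t∈ℕ} and (g̃_t)_{t∈ℕ} be sequences of integrable random vectors with w_0 = w₀ (constant), w_{t+1} = w_t − η·g̃_t, such that for every t: (i) E[⟨∇F(w_t), g̃_t⟩] = E[‖∇F(w_t)‖²] (unbiasedness of the aggregated stochastic gradient), (ii) E[‖g̃_t − ∇F(w_t)‖²] ≤ N, and F(w_t), ‖∇F(w_t)‖², ‖g̃_t‖² are integrable. Then for every t ∈ ℕ: E[F(w_t)] − F* ≤ A^t·(F(w₀) − F*) + (2Lη²·(1 − A^t)/(1 − A))·N. -/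
open MeasureTheory ProbabilityTheory
open scoped ProbabilityTheory RealInnerProductSpace

/-- Descent lemma: L-Lipschitz gradient gives a quadratic upper bound (with crude constant L). -/
lemma fl_smooth_descent {d : ℕ} (F : EuclideanSpace ℝ (Fin d) → ℝ) (L : ℝ) (hL : 0 < L)
    (hdiff : Differentiable ℝ F)
    (hlip : ∀ x y : EuclideanSpace ℝ (Fin d),
      ‖gradient F y - gradient F x‖ ≤ L * ‖y - x‖)
    (x y : EuclideanSpace ℝ (Fin d)) :
    F y ≤ F x + ⟪gradient F x, y - x⟫ + L * ‖y - x‖ ^ 2 := by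
  set v := gradient F x with hv
  set h : EuclideanSpace ℝ (Fin d) → ℝ := fun z => F z - ⟪v, z⟫ with hh
  have hder : ∀ z, HasFDerivAt h
      ((InnerProductSpace.toDual ℝ (EuclideanSpace ℝ (Fin d))) (gradient F z - v)) z := by
    intro z
    have h1 : HasFDerivAt F
        ((InnerProductSpace.toDual ℝ (EuclideanSpace ℝ (Fin d))) (gradient F z)) z :=
      (hdiff z).hasGradientAt.hasFDerivAt
    have h2 : HasFDerivAt (fun z : EuclideanSpace ℝ (Fin d) => ⟪v, z⟫)
        ((InnerProductSpace.toDual ℝ (EuclideanSpace ℝ (Fin d))) v) z := by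
      have heq : (fun z : EuclideanSpace ℝ (Fin d) => ⟪v, z⟫)
          = ⇑((InnerProductSpace.toDual ℝ (EuclideanSpace ℝ (Fin d))) v) := by
        funext z; simp [InnerProductSpace.toDual_apply_apply]
      rw [heq]
      exact ((InnerProductSpace.toDual ℝ (EuclideanSpace ℝ (Fin d))) v).hasFDerivAt
    rw [map_sub]
    exact h1.sub h2
  have hbound : ∀ z ∈ segment ℝ x y, ‖fderiv ℝ h z‖ ≤ L * ‖y - x‖ := by
    intro z hz
    rw [(hder z).fderiv, (InnerProductSpace.toDual ℝ (EuclideanSpace ℝ (Fin d))).norm_map]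
    have h3 : ‖z - x‖ ≤ ‖y - x‖ := by
      obtain ⟨a, b, ha, hb, hab, rfl⟩ := hz
      have h4 : a • x + b • y - x = b • (y - x) := by
        have ha' : a = 1 - b := by linarith
        rw [ha', sub_smul, one_smul, smul_sub]; abel
      rw [h4, norm_smul, Real.norm_eq_abs, abs_of_nonneg hb]
      nlinarith [norm_nonneg (y - x)]
    calc ‖gradient F z - v‖ ≤ L * ‖z - x‖ := hlip x z
      _ ≤ L * ‖y - x‖ := mul_le_mul_of_nonneg_left h3 hL.le
  have hmvt := (convex_segment x y).norm_image_sub_le_of_norm_fderiv_le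
      (fun z _ => (hder z).differentiableAt) hbound
      (left_mem_segment ℝ x y) (right_mem_segment ℝ x y)
  have hxy : h y - h x = F y - F x - ⟪v, y - x⟫ := by
    simp only [hh, inner_sub_right]; ring
  have habs : F y - F x - ⟪v, y - x⟫ ≤ L * ‖y - x‖ * ‖y - x‖ := by
    rw [← hxy]
    exact le_trans (le_abs_self _) (by rwa [Real.norm_eq_abs] at hmvt)
  nlinarith [habs, sq_nonneg ‖y - x‖]

/-- Polyak–Łojasiewicz inequality from strong convexity. -/
lemma fl_pl_ineq {d : ℕ} (F : EuclideanSpace ℝ (Fin d) → ℝ) (μ : ℝ) (hμ : 0 < μ)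
    (hsc : ∀ x y : EuclideanSpace ℝ (Fin d),
      F y ≥ F x + ⟪gradient F x, y - x⟫ + (μ / 2) * ‖y - x‖ ^ 2)
    (Fstar : ℝ) (wstar : EuclideanSpace ℝ (Fin d)) (hFstar : F wstar = Fstar)
    (x : EuclideanSpace ℝ (Fin d)) :
    2 * μ * (F x - Fstar) ≤ ‖gradient F x‖ ^ 2 := by
  have h := hsc x wstar
  set gx := gradient F x with hgx
  set vv := wstar - x with hvv
  have key : (0:ℝ) ≤ ‖μ • vv + gx‖ ^ 2 := sq_nonneg _
  have expand : ‖μ • vv + gx‖ ^ 2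
      = μ ^ 2 * ‖vv‖ ^ 2 + 2 * (μ * ⟪gx, vv⟫) + ‖gx‖ ^ 2 := by
    rw [norm_add_sq_real, real_inner_smul_left, real_inner_comm, norm_smul,
      Real.norm_eq_abs, mul_pow, sq_abs]
  rw [expand] at key
  have h1 : ⟪gx, vv⟫ + μ / 2 * ‖vv‖ ^ 2 ≤ Fstar - F x := by
    rw [← hFstar]; linarith [h]
  have h2 := mul_le_mul_of_nonneg_left h1 (by linarith : (0:ℝ) ≤ 2 * μ)
  nlinarith [h2, key]

/-- Pure arithmetic fact for the one-step bound. -/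
lemma fl_arith1 (L μ η N I Dt Dt1 Fstar : ℝ)
    (hcoef : 0 ≤ η - L * η ^ 2) (hfact2 : 0 ≤ L * η ^ 2 * N)
    (hkey : Dt1 ≤ Dt - (η - L * η ^ 2) * I + L * η ^ 2 * N)
    (hpl : 2 * μ * (Dt - Fstar) ≤ I) :
    Dt1 - Fstar ≤ (1 - 2 * μ * η + 2 * L * μ * η ^ 2) * (Dt - Fstar) + 2 * L * η ^ 2 * N := by
  nlinarith [mul_nonneg hcoef (by linarith : 0 ≤ I - 2 * μ * (Dt - Fstar))]

/-- Theorem 1 of the paper: convergence bound for federated learning with noisy aggregated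
stochastic gradients. For `F` differentiable with `L`-Lipschitz gradient and `μ`-strongly
convex (`0 < μ ≤ L`), attaining its minimum `F*`, learning rate `0 < η ≤ 1/(2L)` and
uniform gradient-noise variance bound `N`, the iterates `w_{t+1} = w_t − η g̃_t` with
unbiased aggregated stochastic gradients satisfy
`E[F(w_t)] − F* ≤ Aᵗ (F(w₀) − F*) + (2Lη² (1 − Aᵗ)/(1 − A)) N`
where `A = 1 − 2μη + 2Lμη²`. -/
theorem fl_convergence_bound {d : ℕ} (hd : 0 < d)
    (F : EuclideanSpace ℝ (Fin d) → ℝ) (L μ : ℝ) (hL : 0 < L) (hμ : 0 < μ) (hμL : μ ≤ L)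
    (hdiff : Differentiable ℝ F)
    (hlip : ∀ x y : EuclideanSpace ℝ (Fin d),
      ‖gradient F y - gradient F x‖ ≤ L * ‖y - x‖)
    (hsc : ∀ x y : EuclideanSpace ℝ (Fin d),
      F y ≥ F x + ⟪gradient F x, y - x⟫ + (μ / 2) * ‖y - x‖ ^ 2)
    (Fstar : ℝ) (wstar : EuclideanSpace ℝ (Fin d))
    (hFstar : F wstar = Fstar) (hmin : ∀ x : EuclideanSpace ℝ (Fin d), Fstar ≤ F x)
    (η A : ℝ) (hη : 0 < η) (hη' : η ≤ 1 / (2 * L))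
    (hA : A = 1 - 2 * μ * η + 2 * L * μ * η ^ 2)
    {Ω : Type*} [MeasureSpace Ω] [IsProbabilityMeasure (ℙ : Measure Ω)]
    (N : ℝ) (hN : 0 ≤ N)
    (w₀ : EuclideanSpace ℝ (Fin d))
    (w g : ℕ → Ω → EuclideanSpace ℝ (Fin d))
    (hw0 : ∀ ω : Ω, w 0 ω = w₀)
    (hupdate : ∀ (t : ℕ) (ω : Ω), w (t + 1) ω = w t ω - η • g t ω)
    (hwint : ∀ t : ℕ, Integrable (w t)) (hgint : ∀ t : ℕ, Integrable (g t))
    (hwmeas : ∀ t : ℕ, Measurable (w t)) (hgmeas : ∀ t : ℕ, Measurable (g t))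
    (hintFw : ∀ t : ℕ, Integrable (fun ω => F (w t ω)))
    (hintgrad : ∀ t : ℕ, Integrable (fun ω => ‖gradient F (w t ω)‖ ^ 2))
    (hintg : ∀ t : ℕ, Integrable (fun ω => ‖g t ω‖ ^ 2))
    (hunbiased : ∀ t : ℕ,
      ∫ ω, ⟪gradient F (w t ω), g t ω⟫ = ∫ ω, ‖gradient F (w t ω)‖ ^ 2)
    (hvar : ∀ t : ℕ, ∫ ω, ‖g t ω - gradient F (w t ω)‖ ^ 2 ≤ N) :
    ∀ t : ℕ, (∫ ω, F (w t ω)) - Fstar ≤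
      A ^ t * (F w₀ - Fstar) + (2 * L * η ^ 2 * (1 - A ^ t) / (1 - A)) * N := by
  -- basic facts about η, A
  have hLη : L * η ≤ 1 / 2 := by
    rw [le_div_iff₀ (by linarith : (0:ℝ) < 2 * L)] at hη'
    nlinarith
  have hμη : μ * η ≤ L * η := mul_le_mul_of_nonneg_right hμL hη.le
  have hA0 : 0 ≤ A := by nlinarith [mul_pos hμ hη]
  have hA1 : 0 < 1 - A := by nlinarith [mul_pos hμ hη]
  -- gradient is continuous, hence composed maps are measurable
  have hGcont : Continuous (fun z : EuclideanSpace ℝ (Fin d) => gradient F z) := by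
    have : LipschitzWith (Real.toNNReal L) (fun z => gradient F z) := by
      apply LipschitzWith.of_dist_le_mul
      intro a b
      rw [dist_eq_norm, dist_eq_norm, Real.coe_toNNReal L hL.le]
      exact hlip b a
    exact this.continuous
  have hGmeas : ∀ t : ℕ, Measurable (fun ω => gradient F (w t ω)) :=
    fun t => hGcont.measurable.comp (hwmeas t)
  -- integrability of inner product and of the variance term
  have hintinner : ∀ t : ℕ, Integrable (fun ω => ⟪gradient F (w t ω), g t ω⟫) := by
    intro t
    refine Integrable.mono' ((hintgrad t).add (hintg t))
      ((hGmeas t).inner (hgmeas t)).aestronglyMeasurable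
      (Filter.Eventually.of_forall fun ω => ?_)
    have h1 := abs_real_inner_le_norm (gradient F (w t ω)) (g t ω)
    simp only [Pi.add_apply]
    rw [Real.norm_eq_abs]
    nlinarith [sq_nonneg (‖gradient F (w t ω)‖ - ‖g t ω‖)]
  have hintvar : ∀ t : ℕ, Integrable (fun ω => ‖g t ω - gradient F (w t ω)‖ ^ 2) := by
    intro t
    refine Integrable.mono' (((hintg t).add (hintgrad t)).const_mul 2)
      (((hgmeas t).sub (hGmeas t)).norm.pow measurable_const).aestronglyMeasurable
      (Filter.Eventually.of_forall fun ω => ?_)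
    simp only [Pi.add_apply]
    rw [Real.norm_eq_abs, abs_of_nonneg (by positivity)]
    have h1 := norm_sub_le (g t ω) (gradient F (w t ω))
    nlinarith [sq_nonneg (‖g t ω‖ - ‖gradient F (w t ω)‖), norm_nonneg (g t ω - gradient F (w t ω)), norm_nonneg (g t ω), norm_nonneg (gradient F (w t ω))]
  -- one-step inequality
  have step : ∀ t : ℕ, (∫ ω, F (w (t + 1) ω)) - Fstar ≤
      A * ((∫ ω, F (w t ω)) - Fstar) + 2 * L * η ^ 2 * N := by
    intro t
    set I := ∫ ω, ‖gradient F (w t ω)‖ ^ 2 with hI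
    -- pointwise descent
    have hpw : ∀ ω, F (w (t + 1) ω) ≤
        F (w t ω) - η * ⟪gradient F (w t ω), g t ω⟫ + L * η ^ 2 * ‖g t ω‖ ^ 2 := by
      intro ω
      have hd1 := fl_smooth_descent F L hL hdiff hlip (w t ω) (w (t + 1) ω)
      have he : w (t + 1) ω - w t ω = -η • g t ω := by
        rw [hupdate t ω, neg_smul]; abel
      rw [he] at hd1
      rw [inner_smul_right, norm_smul, Real.norm_eq_abs] at hd1
      have habs : |(-η)| = η := by rw [abs_neg, abs_of_pos hη]
      rw [habs] at hd1
      nlinarith [hd1]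
    -- integrate descent
    have hsub1 : Integrable (fun ω => F (w t ω) - η * ⟪gradient F (w t ω), g t ω⟫) :=
      (hintFw t).sub ((hintinner t).const_mul η)
    have hmul1 : Integrable (fun ω => L * η ^ 2 * ‖g t ω‖ ^ 2) :=
      (hintg t).const_mul (L * η ^ 2)
    have hrhsint : Integrable (fun ω => F (w t ω) - η * ⟪gradient F (w t ω), g t ω⟫
        + L * η ^ 2 * ‖g t ω‖ ^ 2) := hsub1.add hmul1
    have hint1 : (∫ ω, F (w (t + 1) ω)) ≤
        ∫ ω, (F (w t ω) - η * ⟪gradient F (w t ω), g t ω⟫ + L * η ^ 2 * ‖g t ω‖ ^ 2) :=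
      integral_mono (hintFw (t + 1)) hrhsint hpw
    have hint2 : (∫ ω, (F (w t ω) - η * ⟪gradient F (w t ω), g t ω⟫
        + L * η ^ 2 * ‖g t ω‖ ^ 2)) = (∫ ω, F (w t ω)) - η * I
        + L * η ^ 2 * (∫ ω, ‖g t ω‖ ^ 2) := by
      have hmul2 : Integrable (fun ω => η * ⟪gradient F (w t ω), g t ω⟫) :=
        (hintinner t).const_mul η
      rw [integral_add hsub1 hmul1, integral_sub (hintFw t) hmul2,
        integral_const_mul, integral_const_mul, hunbiased t]
    -- second moment bound
    have hg2 : (∫ ω, ‖g t ω‖ ^ 2) ≤ N + I := by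
      have hid : (fun ω => ‖g t ω‖ ^ 2) = fun ω =>
          ‖g t ω - gradient F (w t ω)‖ ^ 2 + 2 * ⟪gradient F (w t ω), g t ω⟫
          - ‖gradient F (w t ω)‖ ^ 2 := by
        funext ω
        rw [norm_sub_sq_real, real_inner_comm]
        ring
      have hmul3 : Integrable (fun ω => 2 * ⟪gradient F (w t ω), g t ω⟫) :=
        (hintinner t).const_mul 2
      have hadd1 : Integrable (fun ω => ‖g t ω - gradient F (w t ω)‖ ^ 2
          + 2 * ⟪gradient F (w t ω), g t ω⟫) := (hintvar t).add hmul3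
      rw [hid, integral_sub hadd1 (hintgrad t),
        integral_add (hintvar t) hmul3, integral_const_mul, hunbiased t]
      have := hvar t
      linarith
    -- PL inequality integrated
    have hplint : 2 * μ * ((∫ ω, F (w t ω)) - Fstar) ≤ I := by
      have hpl : ∀ ω, 2 * μ * (F (w t ω) - Fstar) ≤ ‖gradient F (w t ω)‖ ^ 2 :=
        fun ω => fl_pl_ineq F μ hμ hsc Fstar wstar hFstar (w t ω)
      have hsub2 : Integrable (fun ω => F (w t ω) - Fstar) :=
        (hintFw t).sub (integrable_const Fstar)
      have hmul4 : Integrable (fun ω => 2 * μ * (F (w t ω) - Fstar)) :=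
        hsub2.const_mul (2 * μ)
      have hmono := integral_mono hmul4 (hintgrad t) hpl
      rw [integral_const_mul, integral_sub (hintFw t) (integrable_const Fstar),
        integral_const, probReal_univ] at hmono
      simpa using hmono
    have hcoef : 0 ≤ η - L * η ^ 2 := by nlinarith
    have hkey : (∫ ω, F (w (t + 1) ω)) ≤ (∫ ω, F (w t ω)) - (η - L * η ^ 2) * I
        + L * η ^ 2 * N := by
      rw [hint2] at hint1
      have hprod := mul_le_mul_of_nonneg_left hg2 (by positivity : (0:ℝ) ≤ L * η ^ 2)
      linarith [hint1, hprod]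
    have hfact2 : 0 ≤ L * η ^ 2 * N := by positivity
    rw [hA]
    exact fl_arith1 L μ η N I _ _ Fstar hcoef hfact2 hkey hplint
  -- induction
  intro t
  induction t with
  | zero =>
      have h0 : (∫ ω, F (w 0 ω)) = F w₀ := by
        simp only [hw0]
        simp [integral_const]
      rw [h0]
      simp
  | succ t ih =>
      have hstep := step t
      have h1 : A * ((∫ ω, F (w t ω)) - Fstar) ≤
          A * (A ^ t * (F w₀ - Fstar) + (2 * L * η ^ 2 * (1 - A ^ t) / (1 - A)) * N) :=
        mul_le_mul_of_nonneg_left ih hA0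
      have h2 : A * (A ^ t * (F w₀ - Fstar) + (2 * L * η ^ 2 * (1 - A ^ t) / (1 - A)) * N)
          + 2 * L * η ^ 2 * N
          = A ^ (t + 1) * (F w₀ - Fstar) + (2 * L * η ^ 2 * (1 - A ^ (t + 1)) / (1 - A)) * N := by
        have hne : (1 - A) ≠ 0 := ne_of_gt hA1
        field_simp
        ring
      linarith [hstep, h1, h2.ge, h2.le]
end

section
/- Let d, K be positive natural numbers and let (Ω, P) be a probability space. For k = 1, …, K let v_k : Ω → EuclideanSpace ℝ d be random vectors and ρ_k : Ω → ℝ be random weights with 0 ≤ ρ_k ≤ 1 almost surely, such that: (i) for all k ≠ j, E[ρ_k·ρ_j·⟨v_k, v_j⟩] = 0 (cross terms vanish in expectation); (ii) for each k, E[ρ_k·‖v_k‖²] ≤ E[ρ_k]·σ₀²/(D_k·γ_min), where σ₀² ≥ 0, γ_min > 0, and D_k > 0; (iii) for each k, E[ρ_k] = D_k·q_k / (Σ_{j=1}^K D_j·q_j), where 0 < q_k ≤ 1 for every k. Then E[‖Σ_{k=1}^K ρ_k·v_k‖²] ≤ (σ₀²/γ_min)·K/(Σ_{k=1}^K D_k·q_k).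 -/
open MeasureTheory ProbabilityTheory
open scoped ProbabilityTheory RealInnerProductSpace

/-- Lemma 1 of the paper: variance bound on the aggregated gradient noise. With random
aggregation weights `0 ≤ ρ_k ≤ 1` a.s. whose cross terms vanish in expectation,
per-device noise bound `E[ρ_k ‖v_k‖²] ≤ E[ρ_k] σ₀²/(D_k γ_min)` and mean weights
`E[ρ_k] = D_k q_k / Σ_j D_j q_j` with `0 < q_k ≤ 1`, the aggregated noise satisfies
`E[‖Σ_k ρ_k v_k‖²] ≤ (σ₀²/γ_min) · K/(Σ_k D_k q_k)`. -/
theorem aggregated_gradient_noise_bound {d K : ℕ} (hd : 0 < d) (hK : 0 < K)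
    {Ω : Type*} [MeasureSpace Ω] [IsProbabilityMeasure (ℙ : Measure Ω)]
    (v : Fin K → Ω → EuclideanSpace ℝ (Fin d)) (ρ : Fin K → Ω → ℝ)
    (hvmeas : ∀ k, Measurable (v k)) (hρmeas : ∀ k, Measurable (ρ k))
    (hρ01 : ∀ k, ∀ᵐ ω ∂ℙ, 0 ≤ ρ k ω ∧ ρ k ω ≤ 1)
    (hρint : ∀ k, Integrable (ρ k))
    (hint : ∀ k, Integrable (fun ω => ρ k ω * ‖v k ω‖ ^ 2))
    (hcross : ∀ k j : Fin K, k ≠ j → ∫ ω, ρ k ω * ρ j ω * ⟪v k ω, v j ω⟫ = 0)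
    (σ₀sq γmin : ℝ) (hσ₀ : 0 ≤ σ₀sq) (hγmin : 0 < γmin)
    (D q : Fin K → ℝ) (hD : ∀ k, 0 < D k) (hq : ∀ k, 0 < q k ∧ q k ≤ 1)
    (hnoise : ∀ k, ∫ ω, ρ k ω * ‖v k ω‖ ^ 2 ≤ (∫ ω, ρ k ω) * σ₀sq / (D k * γmin))
    (hmean : ∀ k, ∫ ω, ρ k ω = D k * q k / ∑ j : Fin K, D j * q j) :
    ∫ ω, ‖∑ k : Fin K, ρ k ω • v k ω‖ ^ 2 ≤
      (σ₀sq / γmin) * (K / ∑ k : Fin K, D k * q k) := by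
  haveI : Nonempty (Fin K) := Fin.pos_iff_nonempty.mp hK
  have hKne : (Finset.univ : Finset (Fin K)).Nonempty := Finset.univ_nonempty
  set S : ℝ := ∑ j : Fin K, D j * q j with hS
  have hSpos : 0 < S := Finset.sum_pos (fun j _ => mul_pos (hD j) (hq j).1) hKne
  -- integrand functions
  set f : Fin K → Fin K → Ω → ℝ := fun k j ω => ρ k ω * ρ j ω * ⟪v k ω, v j ω⟫ with hf
  have hae : ∀ᵐ ω ∂(ℙ : Measure Ω), ∀ k : Fin K, 0 ≤ ρ k ω ∧ ρ k ω ≤ 1 :=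
    (ae_all_iff).2 hρ01
  have hfint : ∀ k j : Fin K, Integrable (f k j) := by
    intro k j
    have hmeas : AEStronglyMeasurable (f k j) ℙ := by
      apply Measurable.aestronglyMeasurable
      exact ((hρmeas k).mul (hρmeas j)).mul ((hvmeas k).inner (hvmeas j))
    refine Integrable.mono' (g := fun ω => (1/2) * (ρ k ω * ‖v k ω‖ ^ 2 + ρ j ω * ‖v j ω‖ ^ 2))
      (((hint k).add (hint j)).const_mul _) hmeas ?_
    filter_upwards [hae] with ω h
    obtain ⟨hk0, hk1⟩ := h k
    obtain ⟨hj0, hj1⟩ := h j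
    have hip : |⟪v k ω, v j ω⟫| ≤ ‖v k ω‖ * ‖v j ω‖ := abs_real_inner_le_norm _ _
    have h1 : |f k j ω| ≤ ρ k ω * ρ j ω * (‖v k ω‖ * ‖v j ω‖) := by
      rw [hf]
      simp only []
      rw [abs_mul, abs_of_nonneg (mul_nonneg hk0 hj0)]
      exact mul_le_mul_of_nonneg_left hip (mul_nonneg hk0 hj0)
    rw [Real.norm_eq_abs]
    refine h1.trans ?_
    have hnk : (0:ℝ) ≤ ‖v k ω‖ := norm_nonneg _
    have hnj : (0:ℝ) ≤ ‖v j ω‖ := norm_nonneg _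
    nlinarith [mul_nonneg (mul_nonneg hk0 hj0) (sq_nonneg (‖v k ω‖ - ‖v j ω‖)),
      mul_nonneg (mul_nonneg hk0 (sub_nonneg.2 hj1)) (sq_nonneg ‖v k ω‖),
      mul_nonneg (mul_nonneg hj0 (sub_nonneg.2 hk1)) (sq_nonneg ‖v j ω‖)]
  -- pointwise expansion
  have hexp : ∀ ω, ‖∑ k : Fin K, ρ k ω • v k ω‖ ^ 2 = ∑ k : Fin K, ∑ j : Fin K, f k j ω := by
    intro ω
    rw [← real_inner_self_eq_norm_sq]
    rw [sum_inner]
    refine Finset.sum_congr rfl fun k _ => ?_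
    rw [inner_sum]
    refine Finset.sum_congr rfl fun j _ => ?_
    rw [real_inner_smul_left, real_inner_smul_right, hf]
    ring
  have hstep1 : ∫ ω, ‖∑ k : Fin K, ρ k ω • v k ω‖ ^ 2
      = ∑ k : Fin K, ∑ j : Fin K, ∫ ω, f k j ω := by
    rw [show (fun ω => ‖∑ k : Fin K, ρ k ω • v k ω‖ ^ 2)
        = fun ω => ∑ k : Fin K, ∑ j : Fin K, f k j ω from funext hexp]
    rw [integral_finset_sum _ (fun k _ => integrable_finset_sum _ (fun j _ => hfint k j))]
    exact Finset.sum_congr rfl fun k _ =>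
      integral_finset_sum _ (fun j _ => hfint k j)
  -- off-diagonal vanish
  have hdiag : ∑ k : Fin K, ∑ j : Fin K, ∫ ω, f k j ω = ∑ k : Fin K, ∫ ω, f k k ω := by
    refine Finset.sum_congr rfl fun k _ => ?_
    rw [Finset.sum_eq_single k]
    · intro j _ hjk
      exact hcross k j (Ne.symm hjk)
    · intro h; exact absurd (Finset.mem_univ k) h
  -- diagonal bound
  have hdb : ∀ k : Fin K, ∫ ω, f k k ω ≤ ∫ ω, ρ k ω * ‖v k ω‖ ^ 2 := by
    intro k
    refine integral_mono_ae (hfint k k) (hint k) ?_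
    filter_upwards [hρ01 k] with ω ⟨h0, h1⟩
    rw [hf]
    simp only []
    rw [real_inner_self_eq_norm_sq]
    have : ρ k ω * ρ k ω ≤ ρ k ω := by nlinarith
    have hn : (0:ℝ) ≤ ‖v k ω‖ ^ 2 := sq_nonneg _
    nlinarith
  have hstep2 : ∀ k : Fin K, ∫ ω, ρ k ω * ‖v k ω‖ ^ 2 ≤ (σ₀sq / γmin) * (q k / S) := by
    intro k
    refine (hnoise k).trans ?_
    rw [hmean k]
    rw [div_mul_eq_mul_div, div_div]
    rw [div_le_iff₀ (mul_pos hSpos (mul_pos (hD k) hγmin))]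
    have heq : σ₀sq / γmin * (q k / S) * (S * (D k * γmin)) = D k * q k * σ₀sq := by
      field_simp
    rw [heq]
  calc ∫ ω, ‖∑ k : Fin K, ρ k ω • v k ω‖ ^ 2
      = ∑ k : Fin K, ∫ ω, f k k ω := by rw [hstep1, hdiag]
    _ ≤ ∑ k : Fin K, (σ₀sq / γmin) * (q k / S) :=
        Finset.sum_le_sum fun k _ => (hdb k).trans (hstep2 k)
    _ ≤ ∑ k : Fin K, (σ₀sq / γmin) * (1 / S) := by
        refine Finset.sum_le_sum fun k _ => ?_
        have := (hq k).2
        gcongr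
    _ = (σ₀sq / γmin) * (K / S) := by
        rw [Finset.sum_const, Finset.card_univ, Fintype.card_fin]
        push_cast
        ring
end

section
/- Let b > 0 and define q : ℝ → ℝ by q(p) = exp(−b/p). Fix constants γ_t > 0, A > 0, L > 0, T > 0, T̂ > 0, E_G > 0, c ≥ 0, E ≥ 0, and bounds p^s_min ≤ p^s_max, p^c_min ≤ p^c_max with p^s_min > 0, p^c_min > 0. Define the feasible set S = {(p_s, p_c) : p^s_min ≤ p_s ≤ p^s_max, p^c_min ≤ p_c ≤ p^c_max, A·p_s·L ≥ γ_t, p_s·T + E_G·(p_c·T̂ + c) ≤ E}. Let p_s* = max(p^s_min, γ_t/(A·L)) and p_c* = min(p^c_max, (E − p_s*·T − E_G·c)/(E_G·T̂)), and assume (p_s*, p_c*) ∈ S. Then for every (p_s, p_c) ∈ S, q(p_c) ≤ q(p_c*); that is, (p_s*, p_c*) maximizes the upload success probability q(p_c) over S. -/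
/-! Every feasible sensing power is at least `p_s*`, so the energy left for communication is at
most what `p_s*` leaves; hence every feasible `p_c` is at most `p_c*`, and `q` is increasing on
positive powers. -/

theorem monotoneOn_exp_neg_div {b : ℝ} (hb : 0 ≤ b) :
    MonotoneOn (fun p : ℝ => Real.exp (-b / p)) (Set.Ioi 0) := by
  intro x hx y _ hxy
  simp only [neg_div, Real.exp_le_exp, neg_le_neg_iff]
  exact div_le_div_of_nonneg_left hb hx hxy

theorem div_le_of_le_mul_mul {γ A L p : ℝ} (hA : 0 < A) (hL : 0 < L) (h : γ ≤ A * p * L) :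
    γ / (A * L) ≤ p := by
  rw [div_le_iff₀ (mul_pos hA hL)]
  linarith

theorem le_div_of_energy_budget {ps ps' pc T That EG c E : ℝ} (hEG : 0 < EG) (hThat : 0 < That)
    (hT : 0 ≤ T) (hps : ps' ≤ ps) (hbudget : ps * T + EG * (pc * That + c) ≤ E) :
    pc ≤ (E - ps' * T - EG * c) / (EG * That) := by
  rw [le_div_iff₀ (mul_pos hEG hThat)]
  nlinarith [mul_le_mul_of_nonneg_right hps hT]

theorem per_device_subproblem_optimal_general
    (b : ℝ) (hb : 0 < b)
    (q : ℝ → ℝ) (hq : ∀ p : ℝ, q p = Real.exp (-b / p))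
    (γt A L T That EG : ℝ) (hA : 0 < A) (hL : 0 < L)
    (hT : 0 < T) (hThat : 0 < That) (hEG : 0 < EG)
    (c E : ℝ)
    (psmin psmax pcmin pcmax : ℝ)
    (hpcmin : 0 < pcmin)
    (S : Set (ℝ × ℝ))
    (hS : S = {p : ℝ × ℝ | psmin ≤ p.1 ∧ p.1 ≤ psmax ∧ pcmin ≤ p.2 ∧ p.2 ≤ pcmax ∧
      γt ≤ A * p.1 * L ∧ p.1 * T + EG * (p.2 * That + c) ≤ E})
    (psstar pcstar : ℝ)
    (hpsstar : psstar = max psmin (γt / (A * L)))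
    (hpcstar : pcstar = min pcmax ((E - psstar * T - EG * c) / (EG * That))) :
    ∀ p ∈ S, q p.2 ≤ q pcstar := by
  subst hS
  rintro ⟨ps, pc⟩ ⟨hps_min, -, hpc_min, hpc_max, hsnr, hbudget⟩
  have hps_star : psstar ≤ ps := hpsstar ▸ max_le hps_min (div_le_of_le_mul_mul hA hL hsnr)
  have hpc_star : pc ≤ pcstar :=
    hpcstar ▸ le_min hpc_max (le_div_of_energy_budget hEG hThat hT.le hps_star hbudget)
  have hpc_pos : 0 < pc := hpcmin.trans_le hpc_min
  simp only [hq]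
  exact monotoneOn_exp_neg_div hb.le hpc_pos (hpc_pos.trans_le hpc_star) hpc_star

/-- Closed-form solution of the per-device subproblem: with upload success probability
`q(p) = exp(−b/p)`, sensing-SNR constraint `A·p_s·L ≥ γ_t` and energy budget
`p_s·T + E_G·(p_c·That + c) ≤ E`, the point `(p_s*, p_c*)` with minimal feasible sensing power
and all remaining energy spent on communication maximizes `q(p_c)` over the feasible set. -/
theorem per_device_subproblem_optimal
    (b : ℝ) (hb : 0 < b)
    (q : ℝ → ℝ) (hq : ∀ p : ℝ, q p = Real.exp (-b / p))
    (γt A L T That EG : ℝ) (hγt : 0 < γt) (hA : 0 < A) (hL : 0 < L)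
    (hT : 0 < T) (hThat : 0 < That) (hEG : 0 < EG)
    (c E : ℝ) (hc : 0 ≤ c) (hE : 0 ≤ E)
    (psmin psmax pcmin pcmax : ℝ) (hps : psmin ≤ psmax) (hpc : pcmin ≤ pcmax)
    (hpsmin : 0 < psmin) (hpcmin : 0 < pcmin)
    (S : Set (ℝ × ℝ))
    (hS : S = {p : ℝ × ℝ | psmin ≤ p.1 ∧ p.1 ≤ psmax ∧ pcmin ≤ p.2 ∧ p.2 ≤ pcmax ∧
      γt ≤ A * p.1 * L ∧ p.1 * T + EG * (p.2 * That + c) ≤ E})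
    (psstar pcstar : ℝ)
    (hpsstar : psstar = max psmin (γt / (A * L)))
    (hpcstar : pcstar = min pcmax ((E - psstar * T - EG * c) / (EG * That)))
    (hfeas : (psstar, pcstar) ∈ S) :
    ∀ p ∈ S, q p.2 ≤ q pcstar :=
  per_device_subproblem_optimal_general b hb q hq γt A L T That EG hA hL hT hThat hEG c E psmin
    psmax pcmin pcmax hpcmin S hS psstar pcstar hpsstar hpcstar
end
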